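/- The 8×7 complex matrix with ω = e^{iπ/3} given by rows (1,0,1,2,0,2,0), (0,1,0,6,3,3,6), (-4,-6ω,-3,-2-24ω,6-6ω,-8,0), (0,-1+2ω,0,-4+8ω,-1+2ω,0,0), (0,0,0,0,0,1,1), (0,0,1,6,3,0,0), (0,0,0,0,0,1-2ω,1-2ω), (0,0,-2,-8,-1,-18+6ω,-12+6ω) has rank 6, and its row space contains the standard basis vector e₅ = (0,0,0,0,1,0,0). -/

import Mathlib

/-!
Away from `ω = 1/2` the kernel of the matrix is the line through
`v = (-4, 6, 9, -3/2, 0, -1, 1)`: `M v = 0` identically in `ω`, and once the factor `2ω - 1` of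
the fourth row is cancelled, the first, second, fourth, fifth, sixth and eighth rows force every
kernel vector to be a multiple of `v`. Rank–nullity gives rank `7 - 1 = 6`, and since `v₅ = 0`,
`e₅` is orthogonal to the kernel, hence an (explicit) combination of the rows.
Finally `2 e^{iπ/3} - 1 = i√3 ≠ 0`.
-/

open Matrix

theorem Matrix.rank_add_one_of_ker_mulVecLin_eq_span {K m n : Type*} [Field K] [Fintype m]
    [Fintype n] (A : Matrix m n K) {v : n → K} (hv : v ≠ 0)
    (hker : LinearMap.ker A.mulVecLin = K ∙ v) : A.rank + 1 = Fintype.card n := by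
  rw [← finrank_span_singleton (K := K) hv, ← hker, Matrix.rank,
    LinearMap.finrank_range_add_finrank_ker, Module.finrank_fintype_fun_eq_card]

section RelationMatrix

variable {K : Type*} [Field K]

def relationMatrix (ω : K) : Matrix (Fin 8) (Fin 7) K :=
  !![1, 0, 1, 2, 0, 2, 0;
     0, 1, 0, 6, 3, 3, 6;
     -4, -6*ω, -3, -2-24*ω, 6-6*ω, -8, 0;
     0, -1+2*ω, 0, -4+8*ω, -1+2*ω, 0, 0;
     0, 0, 0, 0, 0, 1, 1;
     0, 0, 1, 6, 3, 0, 0;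
     0, 0, 0, 0, 0, 1-2*ω, 1-2*ω;
     0, 0, -2, -8, -1, -18+6*ω, -12+6*ω]

def relationKernelVector : Fin 7 → K := ![-4, 6, 9, -3/2, 0, -1, 1]

theorem relationMatrix_mulVec (ω : K) (x : Fin 7 → K) :
    relationMatrix ω *ᵥ x =
      ![x 0 + x 2 + 2 * x 3 + 2 * x 5,
        x 1 + 6 * x 3 + 3 * x 4 + 3 * x 5 + 6 * x 6,
        -4 * x 0 - 6 * ω * x 1 - 3 * x 2 - (2 + 24 * ω) * x 3 + (6 - 6 * ω) * x 4 - 8 * x 5,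
        (2 * ω - 1) * (x 1 + 4 * x 3 + x 4),
        x 5 + x 6,
        x 2 + 6 * x 3 + 3 * x 4,
        (1 - 2 * ω) * (x 5 + x 6),
        -2 * x 2 - 8 * x 3 - x 4 + (6 * ω - 18) * x 5 + (6 * ω - 12) * x 6] := by
  ext i
  fin_cases i <;> simp [relationMatrix, mulVec, dotProduct, Fin.sum_univ_succ] <;> ring

theorem relationKernelVector_ne_zero : (relationKernelVector : Fin 7 → K) ≠ 0 :=
  fun h => by simpa [relationKernelVector] using congrFun h 6

theorem vecMul_relationMatrix {ω : K} (hω : 2 * ω - 1 ≠ 0) :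
    vecMul ![0, -2, 0, 2 / (2 * ω - 1), 21, 2, 3, 1] (relationMatrix ω) =
      ![0, 0, 0, 0, 1, 0, 0] := by
  ext j
  fin_cases j <;> simp [relationMatrix, vecMul, dotProduct, Fin.sum_univ_succ] <;>
    field_simp <;> ring

variable [CharZero K]

theorem relationMatrix_mulVec_relationKernelVector (ω : K) :
    relationMatrix ω *ᵥ relationKernelVector = 0 := by
  ext i
  fin_cases i <;> simp [relationMatrix, relationKernelVector, mulVec, dotProduct, Fin.sum_univ_succ] <;>
    ring

theorem eq_smul_relationKernelVector {ω : K} (hω : 2 * ω - 1 ≠ 0) {x : Fin 7 → K}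
    (hx : relationMatrix ω *ᵥ x = 0) : x = x 6 • relationKernelVector := by
  rw [relationMatrix_mulVec] at hx
  simp only [cons_eq_zero_iff] at hx
  obtain ⟨r0, r1, -, r3, r4, r5, -, r7, -⟩ := hx
  have hs : x 1 + 4 * x 3 + x 4 = 0 := (mul_eq_zero.mp r3).resolve_left hω
  have h5 : x 5 = -x 6 := by linear_combination r4
  have h4 : x 4 = 0 := by linear_combination r7 + (24 - 6 * ω) * r4 + 2 * r5 - 2 * r1 + 2 * hs
  have h3 : x 3 = -3 / 2 * x 6 := by linear_combination (r1 - 3 * r4 - hs) / 2 - h4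
  have h2 : x 2 = 9 * x 6 := by linear_combination r5 - 6 * h3 - 3 * h4
  have h1 : x 1 = 6 * x 6 := by linear_combination hs - 4 * h3 - h4
  have h0 : x 0 = -4 * x 6 := by linear_combination r0 - h2 - 2 * h3 - 2 * h5
  ext i
  fin_cases i <;> simp [relationKernelVector, h0, h1, h2, h3, h4, h5] <;> ring

theorem ker_relationMatrix {ω : K} (hω : 2 * ω - 1 ≠ 0) :
    LinearMap.ker (relationMatrix ω).mulVecLin = K ∙ relationKernelVector := by
  ext x
  rw [LinearMap.mem_ker, mulVecLin_apply, Submodule.mem_span_singleton]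
  refine ⟨fun hx => ⟨x 6, (eq_smul_relationKernelVector hω hx).symm⟩, ?_⟩
  rintro ⟨c, rfl⟩
  rw [mulVec_smul, relationMatrix_mulVec_relationKernelVector, smul_zero]

theorem rank_relationMatrix {ω : K} (hω : 2 * ω - 1 ≠ 0) : (relationMatrix ω).rank = 6 := by
  simpa using (relationMatrix ω).rank_add_one_of_ker_mulVecLin_eq_span
    relationKernelVector_ne_zero (ker_relationMatrix hω)

end RelationMatrix

theorem Complex.two_mul_exp_pi_mul_I_div_three_sub_one_ne_zero :
    2 * Complex.exp (Real.pi * Complex.I / 3) - 1 ≠ 0 := by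
  rw [show Real.pi * Complex.I / 3 = ((Real.pi / 3 : ℝ) : ℂ) * Complex.I by push_cast; ring]
  intro h
  have him := congrArg Complex.im h
  simp only [Complex.sub_im, Complex.mul_im, Complex.exp_ofReal_mul_I_im] at him
  simp at him

/-- The matrix of coefficients of the degree -14 relations (Table 1) has rank 6 and
its row space contains e₅ = (0,0,0,0,1,0,0) (the leading term X(-(5,5,2,2))v_Λ). -/
theorem stmt_9 (ω : ℂ) (hω : ω = Complex.exp (Real.pi * Complex.I / 3)) :
    let M : Matrix (Fin 8) (Fin 7) ℂ :=
      !![1, 0, 1, 2, 0, 2, 0;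
         0, 1, 0, 6, 3, 3, 6;
         -4, -6*ω, -3, -2-24*ω, 6-6*ω, -8, 0;
         0, -1+2*ω, 0, -4+8*ω, -1+2*ω, 0, 0;
         0, 0, 0, 0, 0, 1, 1;
         0, 0, 1, 6, 3, 0, 0;
         0, 0, 0, 0, 0, 1-2*ω, 1-2*ω;
         0, 0, -2, -8, -1, -18+6*ω, -12+6*ω]
    M.rank = 6 ∧ ∃ v : Fin 8 → ℂ, Matrix.vecMul v M = ![0, 0, 0, 0, 1, 0, 0] := by
  have hω' : 2 * ω - 1 ≠ 0 := hω ▸ Complex.two_mul_exp_pi_mul_I_div_three_sub_one_ne_zero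
  exact ⟨rank_relationMatrix hω', _, vecMul_relationMatrix hω'⟩
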